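/- Let k ≥ 2 be an integer and A_r = (a_1,…,a_r) ∈ ℤ_{>0}^r with k ∤ a_p for every p. Then the following identity of formal power series in ℂ⟦z⟧ holds: (∏_{p=1}^r (exp(a_p z) − 1)·(e^{2πia_p/k}·exp(−a_p z/k) − 1)) · ∑_{n≥0} C^*_{n,k}(A_r) z^n/n! = ∏_{p=1}^r z·(exp(−a_p z) − 1), where exp(wz) denotes the exponential power series ∑_n w^n z^n/n!. -/

import Mathlib

open scoped BigOperators

/-- The exponential power series `exp (w z) = ∑ wⁿ zⁿ / n!` in `ℂ⟦z⟧`. -/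
noncomputable def expS (w : ℂ) : PowerSeries ℂ :=
  PowerSeries.mk fun n => w ^ n / n.factorial

/-- The Bernoulli polynomial `B_n` evaluated at a complex number (convention `B_1(x) = x - 1/2`). -/
noncomputable def Bpoly (n : ℕ) (x : ℂ) : ℂ :=
  Polynomial.aeval x (Polynomial.bernoulli n)

/-- `C^*_{m,k}(a) = a^{m−1} ∑_{l=0}^{k−1} B_m(−l/k) e^{2πial/k}`. -/
noncomputable def CstarNum (k : ℕ) (a : ℕ) (m : ℕ) : ℂ :=
  (a : ℂ) ^ ((m : ℤ) - 1) *
    ∑ l ∈ Finset.range k,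
      Bpoly m (-(l : ℂ) / k) * Complex.exp (2 * (Real.pi : ℂ) * Complex.I * a * l / k)

/-- `C^*_{m,k}(A_r) = ∑_{l_1+⋯+l_r=m} (m!/(l_1!⋯l_r!)) C^*_{l_1,k}(a_1)⋯C^*_{l_r,k}(a_r)`. -/
noncomputable def CstarVec (k : ℕ) {r : ℕ} (A : Fin r → ℕ) (m : ℕ) : ℂ :=
  ∑ l ∈ Finset.Nat.antidiagonalTuple r m,
    (Nat.multinomial Finset.univ l : ℂ) * ∏ p, CstarNum k (A p) (l p)

open PowerSeries

lemma expS_eq (w : ℂ) : expS w = PowerSeries.rescale w (PowerSeries.exp ℂ) := by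
  ext n
  simp only [expS, coeff_mk, coeff_rescale, coeff_exp]
  rw [eq_comm, div_eq_mul_inv]
  congr 1
  push_cast
  simp

lemma expS_mul (u v : ℂ) : expS u * expS v = expS (u + v) := by
  rw [expS_eq, expS_eq, expS_eq, exp_mul_exp_eq_exp_add]

lemma expS_zero : expS 0 = 1 := by
  ext n
  simp only [expS, coeff_mk, coeff_one]
  rcases n with _ | n <;> simp

lemma expS_pow (u : ℂ) (l : ℕ) : (expS u) ^ l = expS (l * u) := by
  induction l with
  | zero => simp [expS_zero]
  | succ m ih =>
      rw [pow_succ, ih, expS_mul]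
      congr 1
      push_cast
      ring

lemma bern_gen (a t : ℂ) :
    (expS a - 1) * PowerSeries.mk (fun n => a ^ n * Bpoly n t / n.factorial) =
      PowerSeries.C a * PowerSeries.X * expS (a * t) := by
  have h := Polynomial.bernoulli_generating_function (A := ℂ) t
  have h2 := congrArg (PowerSeries.rescale a) h
  simp only [map_mul, map_sub, map_one, rescale_X] at h2
  have hmk : PowerSeries.rescale a (PowerSeries.mk fun n =>
      Polynomial.aeval t ((1 / (n.factorial : ℚ)) • Polynomial.bernoulli n)) =
      PowerSeries.mk (fun n => a ^ n * Bpoly n t / n.factorial) := by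
    ext n
    simp only [coeff_rescale, coeff_mk, map_smul, Bpoly, Rat.smul_def, one_div]
    push_cast
    ring
  rw [hmk] at h2
  rw [rescale_rescale, mul_comm t a, ← expS_eq, ← expS_eq] at h2
  rw [mul_comm, h2, mul_assoc]


lemma mk_Cstar (k a : ℕ) (ha : (a : ℂ) ≠ 0) :
    PowerSeries.mk (fun n => CstarNum k a n / n.factorial) =
      PowerSeries.C (a : ℂ)⁻¹ * ∑ l ∈ Finset.range k,
        PowerSeries.C (Complex.exp (2 * (Real.pi : ℂ) * Complex.I * a * l / k)) *
          PowerSeries.mk (fun n => (a : ℂ) ^ n * Bpoly n (-(l : ℂ) / k) / n.factorial) := by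
  ext n
  have hn : (n.factorial : ℂ) ≠ 0 := by exact_mod_cast n.factorial_ne_zero
  simp only [coeff_mk, PowerSeries.coeff_C_mul, map_sum, CstarNum]
  rw [zpow_sub₀ ha, zpow_natCast, zpow_one, Finset.mul_sum, Finset.mul_sum, Finset.sum_div]
  refine Finset.sum_congr rfl fun l _ => ?_
  field_simp

lemma key_lemma (k a : ℕ) (hk : 2 ≤ k) (ha : 0 < a) :
    (expS a - 1) *
        (PowerSeries.C (Complex.exp (2 * (Real.pi : ℂ) * Complex.I * a / k)) *
            expS (-(a : ℂ) / k) - 1) *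
      PowerSeries.mk (fun n => CstarNum k a n / n.factorial) =
      PowerSeries.X * (expS (-(a : ℂ)) - 1) := by
  have hkC : (k : ℂ) ≠ 0 := Nat.cast_ne_zero.mpr (by omega)
  have haC : (a : ℂ) ≠ 0 := Nat.cast_ne_zero.mpr ha.ne'
  set w : PowerSeries ℂ :=
    PowerSeries.C (Complex.exp (2 * (Real.pi : ℂ) * Complex.I * a / k)) *
      expS (-(a : ℂ) / k) with hwdef
  have hw : ∀ l : ℕ, w ^ l =
      PowerSeries.C (Complex.exp (2 * (Real.pi : ℂ) * Complex.I * a * l / k)) *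
        expS ((a : ℂ) * (-(l : ℂ) / k)) := by
    intro l
    rw [hwdef, mul_pow, ← map_pow, expS_pow, ← Complex.exp_nat_mul]
    congr 2
    · ring
    · ring
  have step1 : (expS a - 1) * PowerSeries.mk (fun n => CstarNum k a n / n.factorial) =
      PowerSeries.X * ∑ l ∈ Finset.range k, w ^ l := by
    rw [mk_Cstar k a haC, Finset.mul_sum, Finset.mul_sum, Finset.mul_sum]
    refine Finset.sum_congr rfl fun l _ => ?_
    have h := bern_gen (a : ℂ) (-(l : ℂ) / k)
    have hCa : PowerSeries.C (a : ℂ)⁻¹ * PowerSeries.C (a : ℂ) = 1 := by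
      rw [← map_mul, inv_mul_cancel₀ haC, map_one]
    rw [hw l]
    linear_combination (PowerSeries.C (a : ℂ)⁻¹ *
        PowerSeries.C (Complex.exp (2 * (Real.pi : ℂ) * Complex.I * a * l / k))) * h +
      (PowerSeries.X *
        PowerSeries.C (Complex.exp (2 * (Real.pi : ℂ) * Complex.I * a * l / k)) *
        expS ((a : ℂ) * (-(l : ℂ) / k))) * hCa
  have hwk : w ^ k = expS (-(a : ℂ)) := by
    rw [hw k]
    have h1 : 2 * (Real.pi : ℂ) * Complex.I * a * k / k = a * (2 * Real.pi * Complex.I) := by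
      field_simp
    have h2 : (a : ℂ) * (-(k : ℂ) / k) = -(a : ℂ) := by
      field_simp
    rw [h1, h2, Complex.exp_nat_mul_two_pi_mul_I, map_one, one_mul]
  calc (expS a - 1) * (w - 1) * PowerSeries.mk (fun n => CstarNum k a n / n.factorial)
      = (w - 1) * ((expS a - 1) * PowerSeries.mk (fun n => CstarNum k a n / n.factorial)) := by
        ring
    _ = (w - 1) * (PowerSeries.X * ∑ l ∈ Finset.range k, w ^ l) := by rw [step1]
    _ = PowerSeries.X * ((∑ l ∈ Finset.range k, w ^ l) * (w - 1)) := by ring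
    _ = PowerSeries.X * (w ^ k - 1) := by rw [geom_sum_mul]
    _ = PowerSeries.X * (expS (-(a : ℂ)) - 1) := by rw [hwk]

lemma mk_CstarVec (k r : ℕ) (A : Fin r → ℕ) :
    PowerSeries.mk (fun n => CstarVec k A n / n.factorial) =
      ∏ p, PowerSeries.mk (fun n => CstarNum k (A p) n / n.factorial) := by
  ext n
  rw [coeff_mk, PowerSeries.coeff_prod]
  simp only [coeff_mk]
  rw [CstarVec, Finset.sum_div]
  refine Finset.sum_nbij' (fun l => Finsupp.equivFunOnFinite.symm l)
    (fun μ => ⇑μ) ?_ ?_ ?_ ?_ ?_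
  · intro l hl
    rw [Finset.Nat.mem_antidiagonalTuple] at hl
    simp [Finset.mem_finsuppAntidiag, hl]
  · intro μ hμ
    rw [Finset.mem_finsuppAntidiag] at hμ
    rw [Finset.Nat.mem_antidiagonalTuple]
    simpa [Finsupp.sum_fintype] using hμ.1
  · intro l _
    funext p
    simp [Finsupp.coe_equivFunOnFinite_symm]
  · intro μ _
    exact Finsupp.equivFunOnFinite_symm_coe μ
  · intro l hl
    rw [Finset.Nat.mem_antidiagonalTuple] at hl
    simp only [Finsupp.coe_equivFunOnFinite_symm]
    have hn : (n.factorial : ℂ) ≠ 0 := by exact_mod_cast n.factorial_ne_zero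
    have hQ : (∏ p, ((l p).factorial : ℂ)) ≠ 0 :=
      Finset.prod_ne_zero_iff.mpr fun p _ => by exact_mod_cast (l p).factorial_ne_zero
    have hc : (∏ p, ((l p).factorial : ℂ)) * (Nat.multinomial Finset.univ l : ℂ) =
        (n.factorial : ℂ) := by
      rw [← hl]
      exact_mod_cast Nat.multinomial_spec Finset.univ l
    rw [Finset.prod_div_distrib, div_eq_div_iff hn hQ]
    linear_combination (∏ p, CstarNum k (A p) (l p)) * hc

/-- Generating function of the `C^*_{n,k}(A_r)`:
`(∏_p (exp(a_p z) − 1)·(e^{2πia_p/k}·exp(−a_p z/k) − 1)) · ∑_n C^*_{n,k}(A_r) zⁿ/n!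
  = ∏_p z·(exp(−a_p z) − 1)` as formal power series in `ℂ⟦z⟧`. -/
theorem statement14 (k : ℕ) (hk : 2 ≤ k) (r : ℕ) (hr : 1 ≤ r)
    (A : Fin r → ℕ) (hA : ∀ p, 0 < A p) (hkA : ∀ p, ¬ k ∣ A p) :
    (∏ p, (expS (A p) - 1) *
          (PowerSeries.C (Complex.exp (2 * (Real.pi : ℂ) * Complex.I * (A p) / k)) *
              expS (-(A p : ℂ) / k) - 1)) *
        PowerSeries.mk (fun n => CstarVec k A n / n.factorial) =
      ∏ p, PowerSeries.X * (expS (-(A p : ℂ)) - 1) := by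
  rw [mk_CstarVec k r A, ← Finset.prod_mul_distrib]
  exact Finset.prod_congr rfl fun p _ => key_lemma k (A p) hk (hA p)
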